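/- Let P be an irreducible stochastic matrix on a countable set X, let m : X → [1,∞), and fix x₀ ∈ X. There exists a strictly positive function f : X → (0,∞) satisfying m(x)·∑_y p(x,y) f(y) = f(x) for all x ≠ x₀ if and only if L_m(x,x₀) < ∞ for all x ≠ x₀. In that case one solution is given by f(x) := L_m(x,x₀) for x ≠ x₀ and f(x₀) := 1. -/

import Mathlib

open scoped Classical ENNReal
open Filter

/-- n-step transition probabilities: entries of the n-th matrix power of `p`. -/
noncomputable def matPow {X : Type*} (p : X → X → ℝ) : ℕ → X → X → ℝ
  | 0 => fun x y => if x = y then 1 else 0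
  | n + 1 => fun x y => ∑' z : X, p x z * matPow p n z y

/-- `pathSum p m x₀ n x` is the sum, over all paths `x = y_0, y_1, …, y_{n+1} = x₀`
of length `n+1` with `y_i ≠ x₀` for `1 ≤ i ≤ n`, of `∏_i m(y_i)·p(y_i,y_{i+1})`,
computed in `[0,∞]`. -/
noncomputable def pathSum {X : Type*} (p : X → X → ℝ) (m : X → ℝ) (x₀ : X) : ℕ → X → ℝ≥0∞
  | 0 => fun x => ENNReal.ofReal (m x * p x x₀)
  | n + 1 => fun x =>
      ∑' y : {y : X // y ≠ x₀}, ENNReal.ofReal (m x * p x y.1) * pathSum p m x₀ n y.1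

/-- The weighted first-passage sum
`L_m(x,x₀) = ∑_{n≥1} ∑_{paths of length n from x to x₀ avoiding x₀ in between}
∏ m(y_i) p(y_i,y_{i+1}) ∈ [0,∞]`. -/
noncomputable def Lsum {X : Type*} (p : X → X → ℝ) (m : X → ℝ) (x x₀ : X) : ℝ≥0∞ :=
  ∑' n : ℕ, pathSum p m x₀ n x

section Aux
variable {X : Type*} [Countable X]

/-- split a tsum over X at the point x₀ -/
lemma tsum_split (x₀ : X) (g : X → ℝ≥0∞) :
    ∑' y : X, g y = g x₀ + ∑' y : {y : X // y ≠ x₀}, g y.1 := by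
  have h1 : ∑' y : {y : X // y ≠ x₀}, g y.1 = ∑' y : X, if y = x₀ then 0 else g y := by
    rw [show (∑' y : {y : X // y ≠ x₀}, g y.1) = ∑' y : ({y : X | y ≠ x₀} : Set X), g y.1 from rfl,
      tsum_subtype]
    refine tsum_congr fun y => ?_
    by_cases hy : y = x₀
    · simp [Set.indicator, hy]
    · simp [Set.indicator, hy]
  rw [h1]
  exact ENNReal.tsum_eq_add_tsum_ite x₀

lemma matPow_nonneg (p : X → X → ℝ) (hp0 : ∀ x y, 0 ≤ p x y) :
    ∀ n x y, 0 ≤ matPow p n x y := by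
  intro n
  induction n with
  | zero => intro x y; simp only [matPow]; split <;> norm_num
  | succ n ih =>
    intro x y
    exact tsum_nonneg fun z => mul_nonneg (hp0 x z) (ih z y)

lemma exists_path (p : X → X → ℝ) (hp0 : ∀ x y, 0 ≤ p x y) :
    ∀ n x y, 0 < matPow p n x y →
      ∃ c : ℕ → X, c 0 = x ∧ c n = y ∧ ∀ i, i < n → 0 < p (c i) (c (i+1)) := by
  intro n
  induction n with
  | zero =>
    intro x y h
    simp only [matPow] at h
    split at h
    · exact ⟨fun _ => x, rfl, by simp [*], fun i hi => absurd hi (Nat.not_lt_zero i)⟩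
    · exact absurd h (lt_irrefl 0)
  | succ n ih =>
    intro x y h
    simp only [matPow] at h
    have : ∃ z, p x z * matPow p n z y ≠ 0 := by
      by_contra hc
      push_neg at hc
      rw [tsum_congr hc, tsum_zero] at h
      exact lt_irrefl 0 h
    obtain ⟨z, hz⟩ := this
    have hpz : 0 < p x z :=
      lt_of_le_of_ne (hp0 x z) (Ne.symm (left_ne_zero_of_mul hz))
    have hmz : 0 < matPow p n z y :=
      lt_of_le_of_ne (matPow_nonneg p hp0 n z y) (Ne.symm (right_ne_zero_of_mul hz))
    obtain ⟨c, hc0, hcn, hcp⟩ := ih z y hmz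
    refine ⟨fun i => if i = 0 then x else c (i - 1), by simp, by simp [hcn], ?_⟩
    intro i hi
    rcases Nat.eq_zero_or_pos i with h0 | h0
    · subst h0; simpa [hc0] using hpz
    · obtain ⟨j, rfl⟩ := Nat.exists_eq_succ_of_ne_zero (Nat.pos_iff_ne_zero.mp h0)
      simpa using hcp j (by omega)

lemma pathSum_pos (p : X → X → ℝ) (m : X → ℝ) (hm1 : ∀ x, 1 ≤ m x) (x₀ : X) :
    ∀ n (c : ℕ → X) x, c 0 = x → c (n+1) = x₀ →
      (∀ i, 1 ≤ i → i ≤ n → c i ≠ x₀) → (∀ i, i ≤ n → 0 < p (c i) (c (i+1))) →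
      0 < pathSum p m x₀ n x := by
  intro n
  induction n with
  | zero =>
    intro c x h0 h1 _ hpos
    have := hpos 0 le_rfl
    rw [h0, h1] at this
    simp only [pathSum]
    exact ENNReal.ofReal_pos.mpr
      (mul_pos (lt_of_lt_of_le one_pos (hm1 x)) this)
  | succ n ih =>
    intro c x h0 h1 hmid hpos
    have hc1 : c 1 ≠ x₀ := hmid 1 le_rfl (by omega)
    have hterm : 0 < ENNReal.ofReal (m x * p x (c 1)) * pathSum p m x₀ n (c 1) := by
      refine ENNReal.mul_pos ?_ ?_
      · have := hpos 0 (by omega)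
        rw [h0] at this
        exact (ENNReal.ofReal_pos.mpr
          (mul_pos (lt_of_lt_of_le one_pos (hm1 x)) this)).ne'
      · refine (ih (fun i => c (i+1)) (c 1) rfl h1 ?_ ?_).ne'
        · intro i hi1 hin; exact hmid (i+1) (by omega) (by omega)
        · intro i hin; exact hpos (i+1) (by omega)
    calc (0 : ℝ≥0∞) < ENNReal.ofReal (m x * p x (c 1)) * pathSum p m x₀ n (c 1) := hterm
      _ ≤ pathSum p m x₀ (n+1) x := by
          simp only [pathSum]
          exact ENNReal.le_tsum (⟨c 1, hc1⟩ : {y : X // y ≠ x₀})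

lemma Lsum_pos (p : X → X → ℝ) (hp0 : ∀ x y, 0 ≤ p x y)
    (hirr : ∀ x y, ∃ n : ℕ, 1 ≤ n ∧ 0 < matPow p n x y)
    (m : X → ℝ) (hm1 : ∀ x, 1 ≤ m x) (x₀ x : X) : 0 < Lsum p m x x₀ := by
  obtain ⟨n, hn1, hn⟩ := hirr x x₀
  obtain ⟨c, hc0, hcn, hcp⟩ := exists_path p hp0 n x x₀ hn
  -- least j with c (j+1) = x₀ and j + 1 ≤ n
  have hex : ∃ j, c (j+1) = x₀ ∧ j + 1 ≤ n := ⟨n - 1, by rw [Nat.sub_add_cancel hn1]; exact ⟨hcn, le_rfl⟩⟩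
  classical
  let j := Nat.find hex
  obtain ⟨hj1, hj2⟩ := Nat.find_spec hex
  have hjmin : ∀ k < j, ¬ (c (k+1) = x₀ ∧ k + 1 ≤ n) := fun k hk => Nat.find_min hex hk
  have hps : 0 < pathSum p m x₀ j x := by
    refine pathSum_pos p m hm1 x₀ j c x hc0 hj1 ?_ ?_
    · intro i hi1 hij hcontra
      exact hjmin (i - 1) (by omega) ⟨by rwa [Nat.sub_add_cancel hi1], by omega⟩
    · intro i hij
      exact hcp i (by omega)
  calc (0:ℝ≥0∞) < pathSum p m x₀ j x := hps
    _ ≤ Lsum p m x x₀ := ENNReal.le_tsum j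

lemma Lsum_rec (p : X → X → ℝ) (m : X → ℝ) (x₀ x : X) :
    Lsum p m x x₀ = ENNReal.ofReal (m x * p x x₀) +
      ∑' y : {y : X // y ≠ x₀}, ENNReal.ofReal (m x * p x y.1) * Lsum p m y.1 x₀ := by
  unfold Lsum
  rw [tsum_eq_zero_add' ENNReal.summable]
  congr 1
  calc ∑' n : ℕ, pathSum p m x₀ (n+1) x
      = ∑' n : ℕ, ∑' y : {y : X // y ≠ x₀},
          ENNReal.ofReal (m x * p x y.1) * pathSum p m x₀ n y.1 := rfl
    _ = ∑' y : {y : X // y ≠ x₀}, ∑' n : ℕ,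
          ENNReal.ofReal (m x * p x y.1) * pathSum p m x₀ n y.1 := ENNReal.tsum_comm
    _ = ∑' y : {y : X // y ≠ x₀},
          ENNReal.ofReal (m x * p x y.1) * ∑' n : ℕ, pathSum p m x₀ n y.1 :=
        tsum_congr fun y => ENNReal.tsum_mul_left

end Aux

section Main
variable {X : Type*} [Countable X]

lemma solution_eq (p : X → X → ℝ) (hp0 : ∀ x y, 0 ≤ p x y)
    (m : X → ℝ) (hm1 : ∀ x, 1 ≤ m x) (x₀ : X)
    (hfin : ∀ x, x ≠ x₀ → Lsum p m x x₀ < ⊤) (x : X) :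
    ENNReal.ofReal (m x) * ∑' y : X,
        ENNReal.ofReal (p x y * (if y = x₀ then (1:ℝ) else (Lsum p m y x₀).toReal)) =
      Lsum p m x x₀ := by
  have hsp := tsum_split x₀ (fun y : X => ENNReal.ofReal
      (p x y * (if y = x₀ then (1:ℝ) else (Lsum p m y x₀).toReal)))
  rw [hsp]
  have hsub : ∀ y : {y : X // y ≠ x₀},
      ENNReal.ofReal (p x y.1 * (if y.1 = x₀ then (1:ℝ) else (Lsum p m y.1 x₀).toReal)) =
        ENNReal.ofReal (p x y.1) * Lsum p m y.1 x₀ := fun y => by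
    rw [if_neg y.2, ENNReal.ofReal_mul (hp0 x y.1), ENNReal.ofReal_toReal (hfin y.1 y.2).ne]
  rw [tsum_congr hsub]
  simp only [if_pos rfl, mul_one]
  have h2 : ∑' (y : {y : X // y ≠ x₀}), ENNReal.ofReal (m x * p x y.1) * Lsum p m y.1 x₀
      = ENNReal.ofReal (m x) *
          ∑' (y : {y : X // y ≠ x₀}), ENNReal.ofReal (p x y.1) * Lsum p m y.1 x₀ := by
    rw [← ENNReal.tsum_mul_left]
    exact tsum_congr fun y => by
      rw [ENNReal.ofReal_mul (le_trans zero_le_one (hm1 x)), mul_assoc]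
  rw [Lsum_rec p m x₀ x, h2, ENNReal.ofReal_mul (le_trans zero_le_one (hm1 x)), mul_add]
  norm_num

lemma key_bound (p : X → X → ℝ) (hp0 : ∀ x y, 0 ≤ p x y)
    (m : X → ℝ) (hm1 : ∀ x, 1 ≤ m x) (x₀ : X)
    (f : X → ℝ) (hfpos : ∀ x, 0 < f x)
    (hf : ∀ x, x ≠ x₀ →
      ENNReal.ofReal (m x) * ∑' y : X, ENNReal.ofReal (p x y * f y) = ENNReal.ofReal (f x)) :
    ∀ n x, x ≠ x₀ →
      (∑ k ∈ Finset.range n, pathSum p m x₀ k x) * ENNReal.ofReal (f x₀) ≤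
        ENNReal.ofReal (f x) := by
  have hm0 : ∀ x, (0:ℝ) ≤ m x := fun x => le_trans zero_le_one (hm1 x)
  have hmp0 : ∀ x y, (0:ℝ) ≤ m x * p x y := fun x y => mul_nonneg (hm0 x) (hp0 x y)
  -- the split-and-rewrite of ofReal (f x)
  have hsplit : ∀ x, x ≠ x₀ →
      ENNReal.ofReal (m x * p x x₀) * ENNReal.ofReal (f x₀) +
        ∑' y : {y : X // y ≠ x₀},
          ENNReal.ofReal (m x * p x y.1) * ENNReal.ofReal (f y.1) =
      ENNReal.ofReal (f x) := by
    intro x hx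
    rw [← hf x hx, tsum_split x₀ (fun y => ENNReal.ofReal (p x y * f y)), mul_add]
    congr 1
    · rw [← ENNReal.ofReal_mul (hmp0 x x₀), mul_assoc, ENNReal.ofReal_mul (hm0 x)]
    · rw [← ENNReal.tsum_mul_left]
      refine tsum_congr fun y => ?_
      rw [← ENNReal.ofReal_mul (hmp0 x y.1), mul_assoc, ENNReal.ofReal_mul (hm0 x)]
  intro n
  induction n with
  | zero => intro x _; simp
  | succ n ih =>
    intro x hx
    calc (∑ k ∈ Finset.range (n+1), pathSum p m x₀ k x) * ENNReal.ofReal (f x₀)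
        = (pathSum p m x₀ 0 x + ∑ k ∈ Finset.range n, pathSum p m x₀ (k+1) x) *
            ENNReal.ofReal (f x₀) := by rw [Finset.sum_range_succ', add_comm]
      _ = pathSum p m x₀ 0 x * ENNReal.ofReal (f x₀) +
            (∑ k ∈ Finset.range n, pathSum p m x₀ (k+1) x) * ENNReal.ofReal (f x₀) :=
          add_mul _ _ _
      _ = ENNReal.ofReal (m x * p x x₀) * ENNReal.ofReal (f x₀) +
            ∑' y : {y : X // y ≠ x₀}, ENNReal.ofReal (m x * p x y.1) *
              ((∑ k ∈ Finset.range n, pathSum p m x₀ k y.1) * ENNReal.ofReal (f x₀)) := by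
          congr 1
          have h1 : ∑ k ∈ Finset.range n, pathSum p m x₀ (k+1) x =
              ∑' y : {y : X // y ≠ x₀}, ENNReal.ofReal (m x * p x y.1) *
                ∑ k ∈ Finset.range n, pathSum p m x₀ k y.1 := by
            calc ∑ k ∈ Finset.range n, pathSum p m x₀ (k+1) x
                = ∑ k ∈ Finset.range n, ∑' y : {y : X // y ≠ x₀},
                    ENNReal.ofReal (m x * p x y.1) * pathSum p m x₀ k y.1 := rfl
              _ = ∑' y : {y : X // y ≠ x₀}, ∑ k ∈ Finset.range n,
                    ENNReal.ofReal (m x * p x y.1) * pathSum p m x₀ k y.1 :=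
                  (Summable.tsum_finsetSum fun _ _ => ENNReal.summable).symm
              _ = ∑' y : {y : X // y ≠ x₀}, ENNReal.ofReal (m x * p x y.1) *
                    ∑ k ∈ Finset.range n, pathSum p m x₀ k y.1 :=
                  tsum_congr fun y => (Finset.mul_sum _ _ _).symm
          rw [h1, ← ENNReal.tsum_mul_right]
          exact tsum_congr fun y => by rw [mul_assoc]
      _ ≤ ENNReal.ofReal (m x * p x x₀) * ENNReal.ofReal (f x₀) +
            ∑' y : {y : X // y ≠ x₀}, ENNReal.ofReal (m x * p x y.1) *
              ENNReal.ofReal (f y.1) := by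
          refine add_le_add_right (ENNReal.tsum_le_tsum fun y => ?_) _
          exact mul_le_mul_right (ih y.1 y.2) _
      _ = ENNReal.ofReal (f x) := hsplit x hx

end Main

/-- there is an `f > 0` with `m(x)·∑_y p(x,y) f(y) = f(x)` for all `x ≠ x₀`
iff `L_m(x,x₀) < ∞` for all `x ≠ x₀`; in that case `f(x) = L_m(x,x₀)` for `x ≠ x₀`,
`f(x₀) = 1`, is a solution. -/
theorem superharmonic_eq_iff_finite_passage {X : Type*} [Countable X]
    (p : X → X → ℝ)
    (hp0 : ∀ x y, 0 ≤ p x y) (hp1 : ∀ x, ∑' y : X, p x y = 1)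
    (hirr : ∀ x y, ∃ n : ℕ, 1 ≤ n ∧ 0 < matPow p n x y)
    (m : X → ℝ) (hm1 : ∀ x, 1 ≤ m x) (x₀ : X) :
    ((∃ f : X → ℝ, (∀ x, 0 < f x) ∧
        ∀ x, x ≠ x₀ →
          ENNReal.ofReal (m x) * ∑' y : X, ENNReal.ofReal (p x y * f y) =
            ENNReal.ofReal (f x)) ↔
      (∀ x, x ≠ x₀ → Lsum p m x x₀ < ⊤)) ∧
    ((∀ x, x ≠ x₀ → Lsum p m x x₀ < ⊤) →
      ((∀ x, 0 < (fun z => if z = x₀ then (1 : ℝ) else (Lsum p m z x₀).toReal) x) ∧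
        ∀ x, x ≠ x₀ →
          ENNReal.ofReal (m x) *
              ∑' y : X, ENNReal.ofReal
                (p x y * (fun z => if z = x₀ then (1 : ℝ) else (Lsum p m z x₀).toReal) y) =
            ENNReal.ofReal ((fun z => if z = x₀ then (1 : ℝ) else (Lsum p m z x₀).toReal) x))) := by
  have hsol : (∀ x, x ≠ x₀ → Lsum p m x x₀ < ⊤) →
      ((∀ x, 0 < (fun z => if z = x₀ then (1 : ℝ) else (Lsum p m z x₀).toReal) x) ∧
        ∀ x, x ≠ x₀ →
          ENNReal.ofReal (m x) *
              ∑' y : X, ENNReal.ofReal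
                (p x y * (fun z => if z = x₀ then (1 : ℝ) else (Lsum p m z x₀).toReal) y) =
            ENNReal.ofReal ((fun z => if z = x₀ then (1 : ℝ) else (Lsum p m z x₀).toReal) x)) := by
    intro hfin
    constructor
    · intro x
      simp only []
      by_cases hx : x = x₀
      · rw [if_pos hx]; exact one_pos
      · rw [if_neg hx]
        exact ENNReal.toReal_pos (Lsum_pos p hp0 hirr m hm1 x₀ x).ne' (hfin x hx).ne
    · intro x hx
      simp only []
      rw [if_neg hx, ENNReal.ofReal_toReal (hfin x hx).ne]
      exact solution_eq p hp0 m hm1 x₀ hfin x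
  refine ⟨⟨?_, ?_⟩, hsol⟩
  · rintro ⟨f, hfpos, hf⟩ x hx
    have F0 : ENNReal.ofReal (f x₀) ≠ 0 := (ENNReal.ofReal_pos.mpr (hfpos x₀)).ne'
    have Ft : ENNReal.ofReal (f x₀) ≠ ⊤ := ENNReal.ofReal_ne_top
    have hb : ∀ n, ∑ k ∈ Finset.range n, pathSum p m x₀ k x ≤
        ENNReal.ofReal (f x) / ENNReal.ofReal (f x₀) := fun n =>
      (ENNReal.le_div_iff_mul_le (Or.inl F0) (Or.inl Ft)).mpr
        (key_bound p hp0 m hm1 x₀ f hfpos hf n x hx)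
    have : Lsum p m x x₀ ≤ ENNReal.ofReal (f x) / ENNReal.ofReal (f x₀) := by
      rw [Lsum, ENNReal.tsum_eq_iSup_nat]
      exact iSup_le hb
    exact lt_of_le_of_lt this (ENNReal.div_lt_top ENNReal.ofReal_ne_top F0)
  · intro hfin
    obtain ⟨hpos, heq⟩ := hsol hfin
    exact ⟨fun z => if z = x₀ then (1 : ℝ) else (Lsum p m z x₀).toReal, hpos, heq⟩
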